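/- arXiv:2410.04043 — 2 statements merged into one kernel-verified Lean document; each statement's English description precedes it below -/
import Mathlib

section
/- Under the unique-optimum assumption, the LP sharpness of the primal problem and of the dual slack problem have the closed forms μ_p = (1/‖P_{Null(A)}(c)‖) · min_{1≤j≤n−m} s*_{m+j}/√(‖(B⁻¹N)_{·,j}‖² + 1) and μ_d = (1/‖q‖) · min_{1≤i≤m} x*_i/√(‖(B⁻¹N)_{i,·}‖² + 1), where P_{Null(A)} is orthogonal projection onto Null(A). -/
/-!
Both feasible regions are the optimum plus the graph `{(-M w, w)}` of a linear map, in
coordinates split at the optimal basis: `M = B⁻¹N` for the primal (around `x*`, with `w` the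
nonbasic part) and `M = -(B⁻¹N)ᵀ` for the dual (around `s*`, with `w` the basic part). Writing
`G w = (-M w, w)`, the distance from a feasible `u* + G w` to the optimal level set inside the
affine space is `σ ⬝ w / ‖s'‖`, where `s'` is the projection of the objective onto the
directions and `σ > 0` the reduced costs (`s*_N`, resp. `x*_B`); feasibility forces `w ≥ 0`.
So `μ = ‖s'‖⁻¹ · inf σ ⬝ w / ‖G w‖`, and the triangle inequality `‖G w‖ ≤ ∑ wⱼ ‖G eⱼ‖` shows
that the infimum is attained along a coordinate ray, where it equals `σⱼ / √(‖M_{·j}‖² + 1)`.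
-/

open Matrix
open scoped BigOperators

noncomputable section

namespace LPPaper

/-- Euclidean norm of a finite real vector. -/
def enorm {k : ℕ} (v : Fin k → ℝ) : ℝ := Real.sqrt (∑ i, (v i) ^ 2)

/-- ℓ₁ norm of a finite real vector. -/
def l1 {k : ℕ} (v : Fin k → ℝ) : ℝ := ∑ i, |v i|

/-- Spectral norm (operator 2-norm w.r.t. Euclidean norms) of a real matrix. -/
def specNorm {α β : Type*} [Fintype α] [Fintype β] [DecidableEq β] (M : Matrix α β ℝ) : ℝ :=
  ‖LinearMap.toContinuousLinearMap (Matrix.toEuclideanLin M)‖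

variable {m n : ℕ}

/-- Embedding of basic indices (the first `m` coordinates). -/
def bIdx (hmn : m ≤ n) (i : Fin m) : Fin n := Fin.castLE hmn i

/-- Embedding of nonbasic indices (the last `n - m` coordinates). -/
def nIdx (hmn : m ≤ n) (j : Fin (n - m)) : Fin n := ⟨m + j.val, by have := j.isLt; omega⟩

/-- The basis matrix `B`: the first `m` columns of `A`. -/
def Bmat (hmn : m ≤ n) (A : Matrix (Fin m) (Fin n) ℝ) : Matrix (Fin m) (Fin m) ℝ :=
  Matrix.of fun i j => A i (bIdx hmn j)

/-- The nonbasic matrix `N`: the last `n - m` columns of `A`. -/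
def Nmat (hmn : m ≤ n) (A : Matrix (Fin m) (Fin n) ℝ) : Matrix (Fin m) (Fin (n - m)) ℝ :=
  Matrix.of fun i j => A i (nIdx hmn j)

/-- The simplex tableau `B⁻¹N` at the optimal basis. -/
def BN (hmn : m ≤ n) (A : Matrix (Fin m) (Fin n) ℝ) : Matrix (Fin m) (Fin (n - m)) ℝ :=
  (Bmat hmn A)⁻¹ * Nmat hmn A

/-- `q := Aᵀ(AAᵀ)⁻¹ b`. -/
def qvec (A : Matrix (Fin m) (Fin n) ℝ) (b : Fin m → ℝ) : Fin n → ℝ :=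
  Aᵀ *ᵥ ((A * Aᵀ)⁻¹ *ᵥ b)

/-- Primal feasibility: `Ax = b`, `x ≥ 0`. -/
def PrimalFeasible (A : Matrix (Fin m) (Fin n) ℝ) (b : Fin m → ℝ) (x : Fin n → ℝ) : Prop :=
  A *ᵥ x = b ∧ ∀ i, 0 ≤ x i

/-- Dual feasibility: `Aᵀy + s = c`, `s ≥ 0`. -/
def DualFeasible (A : Matrix (Fin m) (Fin n) ℝ) (c : Fin n → ℝ) (y : Fin m → ℝ)
    (s : Fin n → ℝ) : Prop :=
  Aᵀ *ᵥ y + s = c ∧ ∀ i, 0 ≤ s i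

/-- The unique-optimum assumption (Assumption 1 of the paper), with the optimal basis being
(after a permutation of the variables) the set of the first `m` indices: the rows of `A` are
linearly independent, `x*` is the unique primal optimal solution, `(y*, s*)` the unique dual
optimal solution, the basis matrix `B` is invertible, `x*ᵢ > 0` exactly for the first `m`
indices and `s*ᵢ > 0` exactly for the remaining indices. -/
structure UniqueOpt (hmn : m ≤ n) (A : Matrix (Fin m) (Fin n) ℝ) (b : Fin m → ℝ)
    (c : Fin n → ℝ) (xstar : Fin n → ℝ) (ystar : Fin m → ℝ) (sstar : Fin n → ℝ) : Prop where
  rows_indep : LinearIndependent ℝ (fun i => A i)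
  primal_feas : PrimalFeasible A b xstar
  primal_opt : ∀ x, PrimalFeasible A b x → c ⬝ᵥ xstar ≤ c ⬝ᵥ x
  primal_uniq : ∀ x, PrimalFeasible A b x → c ⬝ᵥ x = c ⬝ᵥ xstar → x = xstar
  dual_feas : DualFeasible A c ystar sstar
  dual_opt : ∀ y s, DualFeasible A c y s → b ⬝ᵥ y ≤ b ⬝ᵥ ystar
  dual_uniq : ∀ y s, DualFeasible A c y s → b ⬝ᵥ y = b ⬝ᵥ ystar → y = ystar ∧ s = sstar
  basis_isUnit : IsUnit (Bmat hmn A).det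
  xstar_supp : ∀ i : Fin n, 0 < xstar i ↔ (i : ℕ) < m
  sstar_supp : ∀ i : Fin n, 0 < sstar i ↔ m ≤ (i : ℕ)

/-- The `max` factor appearing in the geometric condition number `Φ`. -/
def PhiFactor (hmn : m ≤ n) (A : Matrix (Fin m) (Fin n) ℝ) (xstar sstar : Fin n → ℝ) : ℝ :=
  max (⨆ j : Fin (n - m),
        Real.sqrt ((∑ i, (BN hmn A i j) ^ 2) + 1) / sstar (nIdx hmn j))
      (⨆ i : Fin m,
        Real.sqrt ((∑ j, (BN hmn A i j) ^ 2) + 1) / xstar (bIdx hmn i))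

/-- The geometric condition number `Φ`. -/
def Phi (hmn : m ≤ n) (A : Matrix (Fin m) (Fin n) ℝ) (xstar sstar : Fin n → ℝ) : ℝ :=
  (l1 xstar + l1 sstar) * PhiFactor hmn A xstar sstar

/-- The optimal-solution set of the generic LP `min gᵀu` over `V ∩ ℝⁿ₊`. -/
def OPTset (V : Set (Fin n → ℝ)) (g : Fin n → ℝ) : Set (Fin n → ℝ) :=
  {u | (u ∈ V ∧ ∀ i, 0 ≤ u i) ∧ ∀ v, v ∈ V → (∀ i, 0 ≤ v i) → g ⬝ᵥ u ≤ g ⬝ᵥ v}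

/-- Stability under data perturbations of the generic LP `min gᵀu` over `V ∩ ℝⁿ₊`. -/
def genZeta (V : Set (Fin n → ℝ)) (g : Fin n → ℝ) : ℝ :=
  sInf {t | ∃ dg : Fin n → ℝ, t = enorm dg ∧ (OPTset V (g + dg)).Nonempty ∧
    ¬ OPTset V (g + dg) ⊆ OPTset V g}

/-- The primal affine subspace `V_p = q + Null(A)`. -/
def Vp (A : Matrix (Fin m) (Fin n) ℝ) (b : Fin m → ℝ) : Set (Fin n → ℝ) :=
  {x | ∃ v, A *ᵥ v = 0 ∧ x = qvec A b + v}

/-- The dual affine subspace `V_d = c + Im(Aᵀ)`. -/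
def Vd (A : Matrix (Fin m) (Fin n) ℝ) (c : Fin n → ℝ) : Set (Fin n → ℝ) :=
  {s | ∃ y, s = c + Aᵀ *ᵥ y}

/-- Euclidean distance from a point to a set of vectors. -/
def edistSet {k : ℕ} (u : Fin k → ℝ) (S : Set (Fin k → ℝ)) : ℝ :=
  sInf {d | ∃ v ∈ S, d = enorm (u - v)}

/-- LP sharpness of the generic LP `min gᵀu` over `V ∩ ℝⁿ₊` with unique optimum `u*`:
`μ := inf_{u ∈ F \ {u*}} Dist(u, V ∩ {v : gᵀv = gᵀu*}) / ‖u - u*‖`. -/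
def genMu (V : Set (Fin n → ℝ)) (g ustar : Fin n → ℝ) : ℝ :=
  sInf {t | ∃ u, u ∈ V ∧ (∀ i, 0 ≤ u i) ∧ u ≠ ustar ∧
    t = edistSet u (V ∩ {v | g ⬝ᵥ v = g ⬝ᵥ ustar}) / enorm (u - ustar)}

section EuclideanNorm

variable {k : ℕ}

lemma enorm_eq_norm_toLp (v : Fin k → ℝ) : enorm v = ‖WithLp.toLp 2 v‖ := by
  simp [enorm, EuclideanSpace.norm_eq, sq_abs]

lemma enorm_nonneg (v : Fin k → ℝ) : 0 ≤ enorm v := Real.sqrt_nonneg _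

lemma enorm_pos {v : Fin k → ℝ} (hv : v ≠ 0) : 0 < enorm v := by
  rw [enorm_eq_norm_toLp, norm_pos_iff]
  exact fun h => hv (by simpa using congrArg WithLp.ofLp h)

lemma enorm_smul (t : ℝ) (v : Fin k → ℝ) : enorm (t • v) = |t| * enorm v := by
  rw [enorm_eq_norm_toLp, enorm_eq_norm_toLp, WithLp.toLp_smul, norm_smul, Real.norm_eq_abs]

lemma enorm_sum_le {ι : Type*} (s : Finset ι) (f : ι → Fin k → ℝ) :
    enorm (∑ i ∈ s, f i) ≤ ∑ i ∈ s, enorm (f i) := by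
  simp only [enorm_eq_norm_toLp, WithLp.toLp_sum]
  exact norm_sum_le _ _

lemma abs_dotProduct_le (u v : Fin k → ℝ) : |u ⬝ᵥ v| ≤ enorm u * enorm v := by
  rw [enorm_eq_norm_toLp, enorm_eq_norm_toLp]
  simpa [EuclideanSpace.inner_toLp_toLp, dotProduct_comm] using
    abs_real_inner_le_norm (WithLp.toLp 2 u) (WithLp.toLp 2 v)

lemma dotProduct_self_eq_enorm_sq (v : Fin k → ℝ) : v ⬝ᵥ v = enorm v ^ 2 := by
  rw [enorm, Real.sq_sqrt (by positivity)]
  simp [dotProduct, sq]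

end EuclideanNorm

/-- Inside `V` the level set of `g` is a hyperplane with normal `s'`, the projection of `g`
onto the directions of `V`; the junk value `|0| / 0 = 0` makes the formula right for
`s' = 0` too. -/
lemma edistSet_inter_levelSet {k : ℕ} {V : Set (Fin k → ℝ)} {g s' u ustar : Fin k → ℝ}
    (hu : u ∈ V) (hustar : ustar ∈ V) (hV : ∀ v ∈ V, ∀ t : ℝ, v + t • s' ∈ V)
    (hg : ∀ v ∈ V, ∀ w ∈ V, g ⬝ᵥ (v - w) = s' ⬝ᵥ (v - w)) :
    edistSet u (V ∩ {v | g ⬝ᵥ v = g ⬝ᵥ ustar}) = |s' ⬝ᵥ (u - ustar)| / enorm s' := by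
  have hlevel : ∀ v ∈ V, g ⬝ᵥ v = g ⬝ᵥ ustar ↔ s' ⬝ᵥ (u - v) = s' ⬝ᵥ (u - ustar) := by
    intro v hv
    rw [← hg u hu v hv, ← hg u hu ustar hustar, dotProduct_sub, dotProduct_sub]
    constructor <;> intro h <;> linarith
  have hs' : enorm s' ^ 2 = 0 → s' ⬝ᵥ (u - ustar) = 0 := fun h => by
    rw [show s' = 0 by simpa [enorm_eq_norm_toLp] using h, zero_dotProduct]
  set t₀ := s' ⬝ᵥ (u - ustar) / enorm s' ^ 2
  have hv₀ : u - (u + (-t₀) • s') = t₀ • s' := by simp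
  refine IsLeast.csInf_eq ⟨⟨u + (-t₀) • s', ⟨hV u hu _, ?_⟩, ?_⟩, ?_⟩
  · rw [Set.mem_ofPred_eq, hlevel _ (hV u hu _), hv₀, dotProduct_smul, smul_eq_mul,
      dotProduct_self_eq_enorm_sq, div_mul_cancel_of_imp hs']
  · rw [hv₀, enorm_smul, abs_div, abs_of_nonneg (sq_nonneg (enorm s'))]
    rcases eq_or_ne (enorm s') 0 with h | h
    · simp [h]
    · field_simp
  · rintro _ ⟨v, ⟨hv, hvlevel⟩, rfl⟩
    refine div_le_of_le_mul₀ (enorm_nonneg _) (enorm_nonneg _) ?_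
    rw [mul_comm, ← (hlevel v hv).1 hvlevel]
    exact abs_dotProduct_le _ _

section Cone

variable {k : ℕ} {β : Type*} [Fintype β] [DecidableEq β]

lemma enorm_mulVec_le (G : Matrix (Fin k) β ℝ) (w : β → ℝ) :
    enorm (G *ᵥ w) ≤ ∑ j, |w j| * enorm (G *ᵥ Pi.single j 1) := by
  have hw : w = ∑ j, w j • Pi.single j (1 : ℝ) := by
    simpa [← Pi.single_smul] using (Finset.univ_sum_single w).symm
  calc enorm (G *ᵥ w) = enorm (∑ j, w j • G *ᵥ Pi.single j 1) := by
        conv_lhs => rw [hw]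
        simp only [mulVec_sum, mulVec_smul]
    _ ≤ ∑ j, enorm (w j • G *ᵥ Pi.single j 1) := enorm_sum_le _ _
    _ = ∑ j, |w j| * enorm (G *ᵥ Pi.single j 1) := by simp only [enorm_smul]

/-- By `enorm_mulVec_le` the ratio is minimised on a coordinate axis. -/
lemma sInf_image_dotProduct_div_enorm_mulVec (G : Matrix (Fin k) β ℝ)
    (hG : ∀ w, G *ᵥ w = 0 → w = 0) {σ : β → ℝ} (hσ : ∀ j, 0 < σ j) {F : Set (β → ℝ)}
    (hF : ∀ w ∈ F, 0 ≤ w ∧ w ≠ 0) (hray : ∀ j, ∃ ε > (0 : ℝ), ε • Pi.single j 1 ∈ F) :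
    sInf ((fun w => σ ⬝ᵥ w / enorm (G *ᵥ w)) '' F) =
      ⨅ j, σ j / enorm (G *ᵥ Pi.single j 1) := by
  rcases isEmpty_or_nonempty β with hβ | hβ
  · have hF_empty : F = ∅ :=
      Set.eq_empty_of_forall_notMem fun w hw => (hF w hw).2 (Subsingleton.elim _ _)
    simp [hF_empty]
  have hpos : ∀ {w}, w ≠ 0 → 0 < enorm (G *ᵥ w) := fun hw => enorm_pos (mt (hG _) hw)
  have hcol : ∀ j, 0 < enorm (G *ᵥ Pi.single j 1) := fun j => hpos (by simp)
  set f := fun j => σ j / enorm (G *ᵥ Pi.single j 1)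
  have hf_le : ∀ j, ⨅ j, f j ≤ f j := ciInf_le (Finite.bddBelow_range f)
  obtain ⟨j₀, hj₀⟩ := exists_eq_ciInf_of_finite (f := f)
  obtain ⟨ε, hε, hεF⟩ := hray j₀
  refine IsLeast.csInf_eq ⟨⟨_, hεF, ?_⟩, ?_⟩
  · rw [← hj₀]
    dsimp only [f]
    rw [dotProduct_smul, mulVec_smul, enorm_smul, abs_of_pos hε, dotProduct_single_one,
      smul_eq_mul, mul_div_mul_left _ _ hε.ne']
  rintro _ ⟨w, hw, rfl⟩
  obtain ⟨hw_nonneg, hw_ne⟩ := hF w hw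
  have hinf_nonneg : 0 ≤ ⨅ j, f j := hj₀ ▸ (div_pos (hσ j₀) (hcol j₀)).le
  rw [le_div_iff₀ (hpos hw_ne)]
  calc (⨅ j, f j) * enorm (G *ᵥ w)
      ≤ (⨅ j, f j) * ∑ j, |w j| * enorm (G *ᵥ Pi.single j 1) :=
        mul_le_mul_of_nonneg_left (enorm_mulVec_le G w) hinf_nonneg
    _ ≤ σ ⬝ᵥ w := by
        rw [Finset.mul_sum, dotProduct]
        refine Finset.sum_le_sum fun j _ => ?_
        rw [abs_of_nonneg (hw_nonneg j), mul_left_comm, mul_comm (σ j)]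
        exact mul_le_mul_of_nonneg_left ((le_div_iff₀ (hcol j)).1 (hf_le j)) (hw_nonneg j)

end Cone

section Graph

variable {α β : Type*}

lemma sum_eq_sum_inl_add_sum_inr [Fintype α] [Fintype β] (e : α ⊕ β ≃ Fin n) {R : Type*}
    [AddCommMonoid R] (f : Fin n → R) :
    ∑ i, f i = ∑ a, f (e (.inl a)) + ∑ b, f (e (.inr b)) := by
  rw [← e.sum_comp, Fintype.sum_sum_type]

variable [Fintype β] [DecidableEq β]

def graphMatrix (e : α ⊕ β ≃ Fin n) (M : Matrix α β ℝ) : Matrix (Fin n) β ℝ :=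
  (fromRows (-M) 1).submatrix e.symm id

variable (e : α ⊕ β ≃ Fin n) (M : Matrix α β ℝ)

lemma graphMatrix_mulVec (w : β → ℝ) :
    graphMatrix e M *ᵥ w = Sum.elim (-(M *ᵥ w)) w ∘ e.symm := by
  ext i
  change (fromRows (-M) 1 *ᵥ w) (e.symm i) = _
  rw [fromRows_mulVec, neg_mulVec, one_mulVec]
  rfl

@[simp]
lemma graphMatrix_mulVec_inl (w : β → ℝ) (a : α) :
    (graphMatrix e M *ᵥ w) (e (.inl a)) = -(M *ᵥ w) a := by
  simp [graphMatrix_mulVec]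

@[simp]
lemma graphMatrix_mulVec_inr (w : β → ℝ) (b : β) :
    (graphMatrix e M *ᵥ w) (e (.inr b)) = w b := by
  simp [graphMatrix_mulVec]

lemma eq_zero_of_graphMatrix_mulVec_eq_zero {w : β → ℝ} (hw : graphMatrix e M *ᵥ w = 0) :
    w = 0 :=
  funext fun b => by simpa using congrFun hw (e (.inr b))

lemma enorm_graphMatrix_mulVec_single [Fintype α] (b : β) :
    enorm (graphMatrix e M *ᵥ Pi.single b 1) = Real.sqrt ((∑ a, M a b ^ 2) + 1) := by
  rw [enorm, sum_eq_sum_inl_add_sum_inr e]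
  simp [Pi.single_apply]

lemma dotProduct_graphMatrix_mulVec [Fintype α] {v : Fin n → ℝ}
    (hv : ∀ a, v (e (.inl a)) = 0) (w : β → ℝ) :
    v ⬝ᵥ (graphMatrix e M *ᵥ w) = (fun b => v (e (.inr b))) ⬝ᵥ w := by
  rw [dotProduct, sum_eq_sum_inl_add_sum_inr e]
  simp [hv, dotProduct]

open Topology in
lemma exists_pos_forall_nonneg_add_graphMatrix_mulVec_single [Fintype α] {ustar : Fin n → ℝ}
    (hbasic : ∀ a, 0 < ustar (e (.inl a))) (hnonbasic : ∀ b, ustar (e (.inr b)) = 0) (b : β) :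
    ∃ ε > (0 : ℝ), ∀ i, 0 ≤ (ustar + graphMatrix e M *ᵥ (ε • Pi.single b 1)) i := by
  have hsmall : ∀ᶠ ε in 𝓝[>] (0 : ℝ), ∀ a, ε * M a b < ustar (e (.inl a)) :=
    Filter.eventually_all.2 fun a => Filter.Tendsto.eventually_lt_const (hbasic a)
      (tendsto_nhdsWithin_of_tendsto_nhds (by simpa using (continuous_mul_const (M a b)).tendsto 0))
  obtain ⟨ε, hε, hε_pos⟩ := (hsmall.and self_mem_nhdsWithin).exists
  refine ⟨ε, hε_pos, e.forall_congr_right.1 ?_⟩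
  rintro (a | b')
  · rw [Pi.add_apply, mulVec_smul, Pi.smul_apply, graphMatrix_mulVec_inl,
      mulVec_single_one, smul_eq_mul]
    simpa using (hε a).le
  · rw [Pi.add_apply, mulVec_smul, Pi.smul_apply, graphMatrix_mulVec_inr, hnonbasic, zero_add]
    exact smul_nonneg hε_pos.le ((Pi.single_nonneg.2 zero_le_one : (0 : β → ℝ) ≤ _) b')

lemma edistSet_add_graphMatrix_mulVec {g s' ustar : Fin n → ℝ} {σ : β → ℝ}
    (hs' : s' ∈ Set.range (graphMatrix e M *ᵥ ·))
    (hg : ∀ w, g ⬝ᵥ (graphMatrix e M *ᵥ w) = s' ⬝ᵥ (graphMatrix e M *ᵥ w))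
    (hσ : ∀ w, g ⬝ᵥ (graphMatrix e M *ᵥ w) = σ ⬝ᵥ w) (w : β → ℝ) :
    edistSet (ustar + graphMatrix e M *ᵥ w)
      ((Set.range fun w => ustar + graphMatrix e M *ᵥ w) ∩ {v | g ⬝ᵥ v = g ⬝ᵥ ustar}) =
      |σ ⬝ᵥ w| / enorm s' := by
  obtain ⟨w₀, rfl⟩ := hs'
  have hustar : ustar ∈ Set.range fun w => ustar + graphMatrix e M *ᵥ w := ⟨0, by simp⟩
  rw [edistSet_inter_levelSet (Set.mem_range_self w) hustar]
  · rw [add_sub_cancel_left, ← hg, hσ]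
  · rintro _ ⟨v, rfl⟩ t
    exact ⟨v + t • w₀, by simp [mulVec_add, mulVec_smul, add_assoc]⟩
  · rintro _ ⟨v, rfl⟩ _ ⟨v', rfl⟩
    rw [add_sub_add_left_eq_sub, ← mulVec_sub, hg]

open scoped Pointwise in
/-- Here `s'` is the projection of the objective `g` onto the directions of `V` and `σ` are
the reduced costs. -/
theorem genMu_eq_of_graph [Fintype α] {V : Set (Fin n → ℝ)} {g s' ustar : Fin n → ℝ}
    {σ : β → ℝ} (hV : V = Set.range fun w => ustar + graphMatrix e M *ᵥ w)
    (hs' : s' ∈ Set.range (graphMatrix e M *ᵥ ·))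
    (hg : ∀ w, g ⬝ᵥ (graphMatrix e M *ᵥ w) = s' ⬝ᵥ (graphMatrix e M *ᵥ w))
    (hσ : ∀ w, g ⬝ᵥ (graphMatrix e M *ᵥ w) = σ ⬝ᵥ w) (hσ_pos : ∀ b, 0 < σ b)
    (hbasic : ∀ a, 0 < ustar (e (.inl a))) (hnonbasic : ∀ b, ustar (e (.inr b)) = 0) :
    genMu V g ustar = 1 / enorm s' * ⨅ b, σ b / Real.sqrt ((∑ a, M a b ^ 2) + 1) := by
  subst hV
  set G := graphMatrix e M
  set F := {w | (∀ i, 0 ≤ (ustar + G *ᵥ w) i) ∧ w ≠ 0}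
  have hF : ∀ w ∈ F, 0 ≤ w ∧ w ≠ 0 := fun w ⟨hnn, hw⟩ =>
    ⟨fun b => by simpa [G, hnonbasic] using hnn (e (.inr b)), hw⟩
  have hray : ∀ b, ∃ ε > (0 : ℝ), ε • Pi.single b 1 ∈ F := fun b => by
    obtain ⟨ε, hε, hnn⟩ :=
      exists_pos_forall_nonneg_add_graphMatrix_mulVec_single e M hbasic hnonbasic b
    exact ⟨ε, hε, hnn, smul_ne_zero hε.ne' (by simp)⟩
  have hval : ∀ w ∈ F, (enorm s')⁻¹ • (σ ⬝ᵥ w / enorm (G *ᵥ w)) =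
      edistSet (ustar + G *ᵥ w) ((Set.range fun w => ustar + G *ᵥ w) ∩
        {v | g ⬝ᵥ v = g ⬝ᵥ ustar}) / enorm (ustar + G *ᵥ w - ustar) := fun w hw => by
    rw [edistSet_add_graphMatrix_mulVec e M hs' hg hσ, add_sub_cancel_left, abs_of_nonneg
      (dotProduct_nonneg_of_nonneg (fun b => (hσ_pos b).le) (hF w hw).1), smul_eq_mul]
    ring
  have hset : {t | ∃ u, u ∈ (Set.range fun w => ustar + G *ᵥ w) ∧ (∀ i, 0 ≤ u i) ∧
      u ≠ ustar ∧ t = edistSet u ((Set.range fun w => ustar + G *ᵥ w) ∩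
        {v | g ⬝ᵥ v = g ⬝ᵥ ustar}) / enorm (u - ustar)} =
      (enorm s')⁻¹ • ((fun w => σ ⬝ᵥ w / enorm (G *ᵥ w)) '' F) := by
    ext t
    simp only [Set.mem_ofPred_eq, Set.mem_smul_set, Set.mem_image, Set.mem_range]
    constructor
    · rintro ⟨_, ⟨w, rfl⟩, hnn, hne, rfl⟩
      have hw : w ∈ F := ⟨hnn, fun h => hne (by simp [h])⟩
      exact ⟨_, ⟨w, hw, rfl⟩, hval w hw⟩
    · rintro ⟨_, ⟨w, hw, rfl⟩, rfl⟩
      refine ⟨_, ⟨w, rfl⟩, hw.1, fun h => hw.2 ?_, hval w hw⟩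
      exact eq_zero_of_graphMatrix_mulVec_eq_zero e M (by simpa using h)
  rw [genMu, hset, Real.sInf_smul_of_nonneg (inv_nonneg.2 (enorm_nonneg _)),
    sInf_image_dotProduct_div_enorm_mulVec G (fun w => eq_zero_of_graphMatrix_mulVec_eq_zero e M)
      hσ_pos hF hray, smul_eq_mul, one_div]
  simp_rw [G, enorm_graphMatrix_mulVec_single]

end Graph

section Basis

variable (hmn : m ≤ n) {A : Matrix (Fin m) (Fin n) ℝ}

def splitEquiv : Fin m ⊕ Fin (n - m) ≃ Fin n :=
  finSumFinEquiv.trans (finCongr (Nat.add_sub_cancel' hmn))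

lemma splitEquiv_inl (i : Fin m) : splitEquiv hmn (.inl i) = bIdx hmn i := rfl

lemma splitEquiv_inr (j : Fin (n - m)) : splitEquiv hmn (.inr j) = nIdx hmn j := rfl

lemma mulVec_eq_Bmat_mulVec_add_Nmat_mulVec (v : Fin n → ℝ) :
    A *ᵥ v =
      Bmat hmn A *ᵥ (fun i => v (bIdx hmn i)) + Nmat hmn A *ᵥ (fun j => v (nIdx hmn j)) := by
  ext k
  rw [mulVec, dotProduct, sum_eq_sum_inl_add_sum_inr (splitEquiv hmn)]
  rfl

lemma mulVec_graphMatrix_BN (hB : IsUnit (Bmat hmn A).det) (w : Fin (n - m) → ℝ) :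
    A *ᵥ (graphMatrix (splitEquiv hmn) (BN hmn A) *ᵥ w) = 0 := by
  rw [mulVec_eq_Bmat_mulVec_add_Nmat_mulVec hmn]
  simp only [← splitEquiv_inl hmn, ← splitEquiv_inr hmn, graphMatrix_mulVec_inl,
    graphMatrix_mulVec_inr]
  rw [show (fun i => -(BN hmn A *ᵥ w) i) = -(BN hmn A *ᵥ w) from rfl, mulVec_neg, BN,
    mulVec_mulVec, ← Matrix.mul_assoc, mul_nonsing_inv _ hB, Matrix.one_mul, neg_add_cancel]

lemma mulVec_eq_zero_iff_mem_range_graphMatrix (hB : IsUnit (Bmat hmn A).det) {v : Fin n → ℝ} :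
    A *ᵥ v = 0 ↔ v ∈ Set.range (graphMatrix (splitEquiv hmn) (BN hmn A) *ᵥ ·) := by
  refine ⟨fun hv => ⟨fun j => v (nIdx hmn j), ?_⟩,
    fun ⟨w, hw⟩ => hw ▸ mulVec_graphMatrix_BN hmn hB w⟩
  set d := graphMatrix (splitEquiv hmn) (BN hmn A) *ᵥ (fun j => v (nIdx hmn j)) - v
  have hdN : (fun j => d (nIdx hmn j)) = 0 := by
    ext j
    simp [d, ← splitEquiv_inr hmn]
  have hdB : (fun i => d (bIdx hmn i)) = 0 := by
    have hd : A *ᵥ d = 0 := by rw [mulVec_sub, mulVec_graphMatrix_BN hmn hB, hv, sub_zero]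
    rw [mulVec_eq_Bmat_mulVec_add_Nmat_mulVec hmn, hdN, mulVec_zero, add_zero] at hd
    exact (mulVec_injective_iff_isUnit.2 ((isUnit_iff_isUnit_det _).2 hB)).eq_iff.1
      (hd.trans (mulVec_zero _).symm)
  refine (sub_eq_zero.1 (funext ((splitEquiv hmn).forall_congr_right.1 ?_)))
  rintro (i | j)
  exacts [congrFun hdB i, congrFun hdN j]

lemma graphMatrix_mulVec_transpose_mulVec (hB : IsUnit (Bmat hmn A).det) (z : Fin m → ℝ) :
    graphMatrix ((Equiv.sumComm _ _).trans (splitEquiv hmn)) (-(BN hmn A)ᵀ) *ᵥ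
      ((Bmat hmn A)ᵀ *ᵥ z) = Aᵀ *ᵥ z := by
  refine funext (((Equiv.sumComm _ _).trans (splitEquiv hmn)).forall_congr_right.1 ?_)
  rintro (j | i)
  · rw [graphMatrix_mulVec_inl, neg_mulVec, Pi.neg_apply, neg_neg, mulVec_mulVec,
      ← transpose_mul, BN, ← Matrix.mul_assoc, mul_nonsing_inv _ hB, Matrix.one_mul]
    rfl
  · rw [graphMatrix_mulVec_inr]
    rfl

lemma graphMatrix_mulVec_eq_transpose_mulVec (hB : IsUnit (Bmat hmn A).det) (w : Fin m → ℝ) :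
    graphMatrix ((Equiv.sumComm _ _).trans (splitEquiv hmn)) (-(BN hmn A)ᵀ) *ᵥ w =
      Aᵀ *ᵥ (((Bmat hmn A)ᵀ)⁻¹ *ᵥ w) := by
  have hBt : IsUnit (Bmat hmn A)ᵀ.det := by rwa [det_transpose]
  rw [← graphMatrix_mulVec_transpose_mulVec hmn hB, mulVec_mulVec _ (Bmat hmn A)ᵀ,
    mul_nonsing_inv _ hBt, one_mulVec]

end Basis

lemma isUnit_det_mul_transpose {ι κ : Type*} [Fintype ι] [DecidableEq ι] [Fintype κ]
    {A : Matrix ι κ ℝ} (hA : LinearIndependent ℝ fun i => A i) : IsUnit (A * Aᵀ).det := by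
  have hpos := PosDef.mul_conjTranspose_self A (vecMul_injective_iff.2 hA)
  rw [conjTranspose_eq_transpose_of_trivial] at hpos
  exact (isUnit_iff_isUnit_det _).1 hpos.isUnit

lemma mulVec_transpose_mulVec_inv_mulVec {ι κ : Type*} [Fintype ι] [DecidableEq ι] [Fintype κ]
    {A : Matrix ι κ ℝ} (hA : IsUnit (A * Aᵀ).det) (v : ι → ℝ) :
    A *ᵥ (Aᵀ *ᵥ ((A * Aᵀ)⁻¹ *ᵥ v)) = v := by
  rw [mulVec_mulVec, mulVec_mulVec, mul_nonsing_inv _ hA, one_mulVec]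

namespace UniqueOpt

variable {hmn : m ≤ n} {A : Matrix (Fin m) (Fin n) ℝ} {b : Fin m → ℝ} {c : Fin n → ℝ}
  {xstar : Fin n → ℝ} {ystar : Fin m → ℝ} {sstar : Fin n → ℝ}

lemma xstar_bIdx_pos (h : UniqueOpt hmn A b c xstar ystar sstar) (i : Fin m) :
    0 < xstar (bIdx hmn i) :=
  (h.xstar_supp _).2 i.isLt

lemma xstar_nIdx (h : UniqueOpt hmn A b c xstar ystar sstar) (j : Fin (n - m)) :
    xstar (nIdx hmn j) = 0 :=
  le_antisymm
    (not_lt.1 fun hpos => absurd ((h.xstar_supp _).1 hpos) (not_lt.2 (Nat.le_add_right m j)))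
    (h.primal_feas.2 _)

lemma sstar_nIdx_pos (h : UniqueOpt hmn A b c xstar ystar sstar) (j : Fin (n - m)) :
    0 < sstar (nIdx hmn j) :=
  (h.sstar_supp _).2 (Nat.le_add_right m j)

lemma sstar_bIdx (h : UniqueOpt hmn A b c xstar ystar sstar) (i : Fin m) :
    sstar (bIdx hmn i) = 0 :=
  le_antisymm (not_lt.1 fun hpos => absurd ((h.sstar_supp _).1 hpos) (not_le.2 i.isLt))
    (h.dual_feas.2 _)

theorem genMu_Vp (h : UniqueOpt hmn A b c xstar ystar sstar) :
    genMu (Vp A b) c xstar =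
      1 / enorm (c - Aᵀ *ᵥ ((A * Aᵀ)⁻¹ *ᵥ (A *ᵥ c))) *
        ⨅ j : Fin (n - m), sstar (nIdx hmn j) / Real.sqrt ((∑ i, (BN hmn A i j) ^ 2) + 1) := by
  have hB := h.basis_isUnit
  have hAAt := isUnit_det_mul_transpose h.rows_indep
  have hAq : A *ᵥ qvec A b = b := mulVec_transpose_mulVec_inv_mulVec hAAt b
  have hAx : A *ᵥ xstar = b := h.primal_feas.1
  have hAG := mulVec_graphMatrix_BN hmn hB
  have hnull := fun v => mulVec_eq_zero_iff_mem_range_graphMatrix hmn hB (v := v)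
  refine genMu_eq_of_graph (splitEquiv hmn) (BN hmn A) ?_ ((hnull _).1 ?_) (fun w => ?_)
    (fun w => ?_) h.sstar_nIdx_pos h.xstar_bIdx_pos h.xstar_nIdx
  · ext u
    constructor
    · rintro ⟨v, hv, rfl⟩
      obtain ⟨w, hw⟩ := (hnull (qvec A b + v - xstar)).1 (by
        rw [mulVec_sub, mulVec_add, hv, hAq, hAx, add_zero, sub_self])
      exact ⟨w, by dsimp only at hw ⊢; rw [hw, add_sub_cancel]⟩
    · rintro ⟨w, rfl⟩
      refine ⟨xstar - qvec A b + graphMatrix (splitEquiv hmn) (BN hmn A) *ᵥ w, ?_,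
        by rw [← add_assoc, add_sub_cancel]⟩
      rw [mulVec_add, mulVec_sub, hAx, hAq, hAG, sub_self, add_zero]
  · rw [mulVec_sub, mulVec_transpose_mulVec_inv_mulVec hAAt, sub_self]
  · rw [sub_dotProduct, mulVec_transpose, ← dotProduct_mulVec, hAG, dotProduct_zero, sub_zero]
  · rw [← h.dual_feas.1, add_dotProduct, mulVec_transpose, ← dotProduct_mulVec, hAG,
      dotProduct_zero, zero_add, dotProduct_graphMatrix_mulVec _ _ h.sstar_bIdx]
    rfl

theorem genMu_Vd (h : UniqueOpt hmn A b c xstar ystar sstar) :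
    genMu (Vd A c) (qvec A b) sstar =
      1 / enorm (qvec A b) *
        ⨅ i : Fin m, xstar (bIdx hmn i) / Real.sqrt ((∑ j, (BN hmn A i j) ^ 2) + 1) := by
  have hAAt := isUnit_det_mul_transpose h.rows_indep
  have hB := h.basis_isUnit
  rw [genMu_eq_of_graph ((Equiv.sumComm _ _).trans (splitEquiv hmn)) (-(BN hmn A)ᵀ)
    (s' := qvec A b) (σ := fun i => xstar (bIdx hmn i)) ?_
    ⟨_, graphMatrix_mulVec_transpose_mulVec hmn hB _⟩
    (fun _ => rfl) (fun w => ?_) h.xstar_bIdx_pos h.sstar_nIdx_pos h.sstar_bIdx]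
  · simp
  · ext u
    constructor
    · rintro ⟨y, rfl⟩
      refine ⟨(Bmat hmn A)ᵀ *ᵥ (y + ystar), ?_⟩
      dsimp only
      rw [graphMatrix_mulVec_transpose_mulVec hmn hB, mulVec_add, ← h.dual_feas.1]
      abel
    · rintro ⟨w, rfl⟩
      refine ⟨((Bmat hmn A)ᵀ)⁻¹ *ᵥ w - ystar, ?_⟩
      dsimp only
      rw [graphMatrix_mulVec_eq_transpose_mulVec hmn hB, mulVec_sub, ← h.dual_feas.1]
      abel
  · rw [graphMatrix_mulVec_eq_transpose_mulVec hmn hB, dotProduct_mulVec, vecMul_transpose, qvec,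
      mulVec_transpose_mulVec_inv_mulVec hAAt, ← h.primal_feas.1, ← vecMul_transpose,
      ← dotProduct_mulVec, ← graphMatrix_mulVec_eq_transpose_mulVec hmn hB,
      dotProduct_graphMatrix_mulVec _ _ h.xstar_nIdx]
    rfl

end UniqueOpt

/-- `c - Aᵀ(AAᵀ)⁻¹Ac` is the orthogonal projection `P_{Null(A)}(c)`. -/
theorem mu_p_mu_d_closed_form (m n : ℕ) (hmn : m ≤ n)
    (A : Matrix (Fin m) (Fin n) ℝ) (b : Fin m → ℝ) (c : Fin n → ℝ)
    (xstar : Fin n → ℝ) (ystar : Fin m → ℝ) (sstar : Fin n → ℝ)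
    (h : UniqueOpt hmn A b c xstar ystar sstar) :
    genMu (Vp A b) c xstar =
      (1 / enorm (c - Aᵀ *ᵥ ((A * Aᵀ)⁻¹ *ᵥ (A *ᵥ c)))) *
        ⨅ j : Fin (n - m), sstar (nIdx hmn j) / Real.sqrt ((∑ i, (BN hmn A i j) ^ 2) + 1) ∧
    genMu (Vd A c) (qvec A b) sstar =
      (1 / enorm (qvec A b)) *
        ⨅ i : Fin m, xstar (bIdx hmn i) / Real.sqrt ((∑ j, (BN hmn A i j) ^ 2) + 1) :=
  ⟨h.genMu_Vp, h.genMu_Vd⟩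

end LPPaper
end
end

section
/- Under the unique-optimum assumption, for every ω₁ > 0 and ω₂ > 0, the condition number of the reweighted LP min (ω₁c)ᵀx s.t. Ax = ω₂b, x ≥ 0 satisfies Φ_{ω₁,ω₂} = (ω₂‖x*‖₁ + ω₁‖s*‖₁) · max{1/(ω₁ζ_p), 1/(ω₂ζ_d)}. -/
open Matrix
open scoped BigOperators

noncomputable section

namespace LPPaper

variable {m n : ℕ}

/-- The first `m` indices form the unique optimal basis of the LP `(A, b, c)`:
there are (unique, nondegenerate) primal and dual optimal solutions whose supports are
exactly the first `m` indices and its complement, respectively. -/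
def UniqueOptBasis (hmn : m ≤ n) (A : Matrix (Fin m) (Fin n) ℝ) (b : Fin m → ℝ)
    (c : Fin n → ℝ) : Prop :=
  ∃ x y s, UniqueOpt hmn A b c x y s

/-- Stability of the optimal basis under perturbations of the cost vector `c`. -/
def zetaP (hmn : m ≤ n) (A : Matrix (Fin m) (Fin n) ℝ) (b : Fin m → ℝ) (c : Fin n → ℝ) : ℝ :=
  sInf {t | ∃ dc : Fin n → ℝ, t = enorm dc ∧ ¬ UniqueOptBasis hmn A b (c + dc)}

/-- Stability of the optimal basis under perturbations of the right-hand side `b`,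
measured in the `(AAᵀ)⁻¹`-norm. -/
def zetaD (hmn : m ≤ n) (A : Matrix (Fin m) (Fin n) ℝ) (b : Fin m → ℝ) (c : Fin n → ℝ) : ℝ :=
  sInf {t | ∃ db : Fin m → ℝ, t = Real.sqrt (db ⬝ᵥ ((A * Aᵀ)⁻¹ *ᵥ db)) ∧
    ¬ UniqueOptBasis hmn A (b + db) c}

/-!
The basis `Θ` is the unique optimal basis of `(A, b', c')` exactly when the basic solution
`B⁻¹b'` and the reduced costs `c'_N - (B⁻¹N)ᵀc'_B` are positive. At `(b, c)` these are `x*_B`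
and `s*_N`, and both are affine in the perturbation: the `j`-th reduced cost moves by `⟪g_j, Δc⟫`
with `‖g_j‖² = ‖(B⁻¹N)_{·,j}‖² + 1`, and the `i`-th basic variable by `(B⁻¹Δb)_i`, a linear form of
`(AAᵀ)⁻¹`-norm `√(‖(B⁻¹N)_{i,·}‖² + 1)`. Hence `ζ_p` and `ζ_d` are distances to a union of
half-spaces, `ζ_p = min_j s*_j / ‖g_j‖` and `ζ_d = min_i x*_i / √(‖(B⁻¹N)_{i,·}‖² + 1)`, and
reweighting only scales `x*` and `s*`.
-/

open scoped InnerProductSpace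

section Duality

variable {ι κ : Type*} [Fintype ι] [Fintype κ]

lemma dotProduct_eq_of_feasible {A : Matrix ι κ ℝ} {b y : ι → ℝ} {c x s : κ → ℝ}
    (hx : A *ᵥ x = b) (hy : Aᵀ *ᵥ y + s = c) : c ⬝ᵥ x = b ⬝ᵥ y + s ⬝ᵥ x := by
  rw [← hy, add_dotProduct, ← hx, dotProduct_comm (A *ᵥ x), dotProduct_comm _ x,
    dotProduct_transpose_mulVec]

lemma eq_zero_of_dotProduct_eq_zero {s x : κ → ℝ} (hs : ∀ k, 0 ≤ s k) (hx : ∀ k, 0 ≤ x k)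
    (h : s ⬝ᵥ x = 0) {k : κ} (hk : 0 < s k) : x k = 0 := by
  have := (Finset.sum_eq_zero_iff_of_nonneg fun k _ => mul_nonneg (hs k) (hx k)).mp h k
    (Finset.mem_univ k)
  exact (mul_eq_zero.mp this).resolve_left hk.ne'

end Duality

section RowSpace

variable {ι ι' κ : Type*} [Fintype ι] [Fintype κ] [DecidableEq ι] {A : Matrix ι κ ℝ}

lemma isUnit_det_mul_transpose_s16 (hind : LinearIndependent ℝ (fun i => A i)) :
    IsUnit (A * Aᵀ).det := by
  have := (PosDef.mul_conjTranspose_self A (vecMul_injective_iff.mpr hind)).isUnit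
  rwa [conjTranspose_eq_transpose_of_trivial, isUnit_iff_isUnit_det] at this

lemma dotProduct_self_transpose_mul_inv_mulVec (hU : IsUnit (A * Aᵀ).det) (v : ι → ℝ) :
    (Aᵀ * (A * Aᵀ)⁻¹) *ᵥ v ⬝ᵥ (Aᵀ * (A * Aᵀ)⁻¹) *ᵥ v = v ⬝ᵥ (A * Aᵀ)⁻¹ *ᵥ v := by
  rw [← mulVec_mulVec, dotProduct_transpose_mulVec, mulVec_mulVec, mulVec_mulVec,
    mul_nonsing_inv _ hU, one_mulVec, dotProduct_comm]

lemma mul_mulVec_transpose_mul_inv_mulVec (hU : IsUnit (A * Aᵀ).det) (P : Matrix ι' ι ℝ)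
    (v : ι → ℝ) : (P * A) *ᵥ ((Aᵀ * (A * Aᵀ)⁻¹) *ᵥ v) = P *ᵥ v := by
  rw [mulVec_mulVec, Matrix.mul_assoc, ← Matrix.mul_assoc A, mul_nonsing_inv _ hU,
    Matrix.mul_one]

lemma transpose_mul_inv_mulVec_mul_transpose_mulVec (hU : IsUnit (A * Aᵀ).det) (w : ι → ℝ) :
    (Aᵀ * (A * Aᵀ)⁻¹) *ᵥ ((A * Aᵀ) *ᵥ w) = Aᵀ *ᵥ w := by
  rw [mulVec_mulVec, Matrix.mul_assoc, nonsing_inv_mul _ hU, Matrix.mul_one]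

end RowSpace

lemma enorm_eq_sqrt_dotProduct {k : ℕ} (v : Fin k → ℝ) : enorm v = √(v ⬝ᵥ v) := by
  simp [enorm, dotProduct, sq]

lemma norm_toLp_eq_enorm {k : ℕ} (v : Fin k → ℝ) : ‖WithLp.toLp 2 v‖ = enorm v := by
  simp [EuclideanSpace.norm_eq, enorm]

lemma l1_smul {k : ℕ} {t : ℝ} (ht : 0 ≤ t) (v : Fin k → ℝ) : l1 (t • v) = t * l1 v := by
  simp [l1, Finset.mul_sum, abs_mul, abs_of_nonneg ht]

section Distance

variable {ι V E : Type*} [Finite ι] [AddCommGroup V] [Module ℝ V] [NormedAddCommGroup E]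
  [InnerProductSpace ℝ E]

theorem sInf_norm_add_inner_nonpos_eq_iInf (T : V →ₗ[ℝ] E) (g : ι → E)
    (hgT : ∀ j, g j ∈ LinearMap.range T) (hg : ∀ j, g j ≠ 0) (p : ι → ℝ) (hp : ∀ j, 0 ≤ p j) :
    sInf {t | ∃ v, t = ‖T v‖ ∧ ∃ j, p j + ⟪g j, T v⟫_ℝ ≤ 0} = ⨅ j, p j / ‖g j‖ := by
  rcases isEmpty_or_nonempty ι with hι | hι
  · simp
  obtain ⟨j₀, hj₀⟩ := exists_eq_ciInf_of_finite (f := fun j => p j / ‖g j‖)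
  rw [← hj₀]
  refine IsLeast.csInf_eq ⟨?_, ?_⟩
  · obtain ⟨v₀, hv₀⟩ := hgT j₀
    have hg₀ : 0 < ‖g j₀‖ := norm_pos_iff.mpr (hg j₀)
    refine ⟨-(p j₀ / ‖g j₀‖ ^ 2) • v₀, ?_, j₀, ?_⟩
    · have := hp j₀
      rw [map_smul, hv₀, norm_smul, norm_neg, Real.norm_of_nonneg (by positivity)]
      field_simp
    · rw [map_smul, hv₀, inner_smul_right, real_inner_self_eq_norm_sq]
      field_simp
      simp
  · rintro t ⟨v, rfl, j, hj⟩
    have hgj : 0 < ‖g j‖ := norm_pos_iff.mpr (hg j)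
    have hcs : -⟪g j, T v⟫_ℝ ≤ ‖g j‖ * ‖T v‖ := by
      rw [← inner_neg_left, ← norm_neg (g j)]
      exact real_inner_le_norm _ _
    calc p j₀ / ‖g j₀‖ ≤ p j / ‖g j‖ := hj₀ ▸ ciInf_le (Set.finite_range _).bddBelow j
      _ ≤ ‖T v‖ := by rw [div_le_iff₀ hgj]; linarith

end Distance

lemma iSup_div_mul_eq_one_div_mul_iInf {ι : Type*} [Finite ι] {p q : ι → ℝ}
    (hp : ∀ j, 0 < p j) (hq : ∀ j, 0 < q j) {ω : ℝ} (hω : 0 < ω) :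
    ⨆ j, q j / (ω * p j) = 1 / (ω * ⨅ j, p j / q j) := by
  rcases isEmpty_or_nonempty ι with hι | hι
  · simp
  obtain ⟨j₀, hj₀⟩ := exists_eq_ciInf_of_finite (f := fun j => p j / q j)
  have hpq : ∀ j, q j / (ω * p j) = 1 / (ω * (p j / q j)) := fun j => by
    have := (hp j).ne'; have := (hq j).ne'; field_simp
  simp_rw [hpq, ← hj₀]
  refine le_antisymm (ciSup_le fun j => ?_) (le_ciSup (f := fun j => 1 / (ω * (p j / q j)))
    (Set.finite_range _).bddAbove j₀)
  have := hp j₀; have := hq j₀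
  exact one_div_le_one_div_of_le (by positivity) (mul_le_mul_of_nonneg_left
    (hj₀ ▸ ciInf_le (Set.finite_range _).bddBelow j) hω.le)

lemma bIdx_lt (hmn : m ≤ n) (i : Fin m) : (bIdx hmn i : ℕ) < m := i.isLt

lemma le_nIdx (hmn : m ≤ n) (j : Fin (n - m)) : m ≤ (nIdx hmn j : ℕ) := Nat.le_add_right m j

def idxEquiv (hmn : m ≤ n) : Fin m ⊕ Fin (n - m) ≃ Fin n :=
  finSumFinEquiv.trans (finCongr (by omega))

@[simp] lemma idxEquiv_inl (hmn : m ≤ n) (i : Fin m) : idxEquiv hmn (.inl i) = bIdx hmn i := rfl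

@[simp] lemma idxEquiv_inr (hmn : m ≤ n) (j : Fin (n - m)) :
    idxEquiv hmn (.inr j) = nIdx hmn j := rfl

lemma sum_idx (hmn : m ≤ n) (f : Fin n → ℝ) :
    ∑ k, f k = ∑ i, f (bIdx hmn i) + ∑ j, f (nIdx hmn j) := by
  rw [← (idxEquiv hmn).sum_comp, Fintype.sum_sum_type]
  simp

lemma forall_idx (hmn : m ≤ n) {P : Fin n → Prop} :
    (∀ k, P k) ↔ (∀ i, P (bIdx hmn i)) ∧ ∀ j, P (nIdx hmn j) := by
  rw [← (idxEquiv hmn).forall_congr_right, Sum.forall]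
  simp

def basicPart (hmn : m ≤ n) (v : Fin n → ℝ) : Fin m → ℝ := fun i => v (bIdx hmn i)

def nonbasicPart (hmn : m ≤ n) (v : Fin n → ℝ) : Fin (n - m) → ℝ := fun j => v (nIdx hmn j)

def joinIdx (hmn : m ≤ n) (u : Fin m → ℝ) (w : Fin (n - m) → ℝ) : Fin n → ℝ :=
  fun k => Sum.elim u w ((idxEquiv hmn).symm k)

section Split

variable (hmn : m ≤ n)

@[simp] lemma basicPart_add (v w : Fin n → ℝ) :
    basicPart hmn (v + w) = basicPart hmn v + basicPart hmn w := rfl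

@[simp] lemma basicPart_sub (v w : Fin n → ℝ) :
    basicPart hmn (v - w) = basicPart hmn v - basicPart hmn w := rfl

@[simp] lemma nonbasicPart_add (v w : Fin n → ℝ) :
    nonbasicPart hmn (v + w) = nonbasicPart hmn v + nonbasicPart hmn w := rfl

@[simp] lemma joinIdx_bIdx (u : Fin m → ℝ) (w : Fin (n - m) → ℝ) (i : Fin m) :
    joinIdx hmn u w (bIdx hmn i) = u i := by
  rw [joinIdx, ← idxEquiv_inl, Equiv.symm_apply_apply, Sum.elim_inl]

@[simp] lemma joinIdx_nIdx (u : Fin m → ℝ) (w : Fin (n - m) → ℝ) (j : Fin (n - m)) :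
    joinIdx hmn u w (nIdx hmn j) = w j := by
  rw [joinIdx, ← idxEquiv_inr, Equiv.symm_apply_apply, Sum.elim_inr]

@[simp] lemma basicPart_joinIdx (u : Fin m → ℝ) (w : Fin (n - m) → ℝ) :
    basicPart hmn (joinIdx hmn u w) = u := funext (joinIdx_bIdx hmn u w)

@[simp] lemma nonbasicPart_joinIdx (u : Fin m → ℝ) (w : Fin (n - m) → ℝ) :
    nonbasicPart hmn (joinIdx hmn u w) = w := funext (joinIdx_nIdx hmn u w)

lemma funext_idx {v w : Fin n → ℝ} (hB : basicPart hmn v = basicPart hmn w)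
    (hN : nonbasicPart hmn v = nonbasicPart hmn w) : v = w :=
  funext ((forall_idx hmn).mpr ⟨congrFun hB, congrFun hN⟩)

lemma dotProduct_idx (u v : Fin n → ℝ) :
    u ⬝ᵥ v = basicPart hmn u ⬝ᵥ basicPart hmn v + nonbasicPart hmn u ⬝ᵥ nonbasicPart hmn v :=
  sum_idx hmn _

lemma sum_sq_joinIdx (u : Fin m → ℝ) (w : Fin (n - m) → ℝ) :
    ∑ k, joinIdx hmn u w k ^ 2 = ∑ i, u i ^ 2 + ∑ j, w j ^ 2 := by
  simp [sum_idx hmn]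

variable (A : Matrix (Fin m) (Fin n) ℝ)

lemma mulVec_idx (v : Fin n → ℝ) :
    A *ᵥ v = Bmat hmn A *ᵥ basicPart hmn v + Nmat hmn A *ᵥ nonbasicPart hmn v :=
  funext fun i => dotProduct_idx hmn (A i) v

lemma basicPart_transpose_mulVec (y : Fin m → ℝ) :
    basicPart hmn (Aᵀ *ᵥ y) = (Bmat hmn A)ᵀ *ᵥ y := rfl

lemma nonbasicPart_transpose_mulVec (y : Fin m → ℝ) :
    nonbasicPart hmn (Aᵀ *ᵥ y) = (Nmat hmn A)ᵀ *ᵥ y := rfl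

end Split

section Tableau

variable (hmn : m ≤ n) (A : Matrix (Fin m) (Fin n) ℝ)

def reducedCost (c' : Fin n → ℝ) : Fin (n - m) → ℝ :=
  nonbasicPart hmn c' - (BN hmn A)ᵀ *ᵥ basicPart hmn c'

lemma reducedCost_add (c₁ c₂ : Fin n → ℝ) :
    reducedCost hmn A (c₁ + c₂) = reducedCost hmn A c₁ + reducedCost hmn A c₂ := by
  simp only [reducedCost, basicPart_add, nonbasicPart_add, mulVec_add]
  abel

lemma BN_transpose_mulVec_transpose_mulVec (hB : IsUnit (Bmat hmn A).det) (y : Fin m → ℝ) :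
    (BN hmn A)ᵀ *ᵥ ((Bmat hmn A)ᵀ *ᵥ y) = (Nmat hmn A)ᵀ *ᵥ y := by
  rw [mulVec_mulVec, BN, transpose_mul, Matrix.mul_assoc, ← transpose_mul,
    mul_nonsing_inv _ hB, transpose_one, Matrix.mul_one]

lemma inv_mul_row_eq_joinIdx (hB : IsUnit (Bmat hmn A).det) (i : Fin m) :
    ((Bmat hmn A)⁻¹ * A) i = joinIdx hmn (Pi.single i 1) (BN hmn A i) := by
  refine funext_idx hmn ?_ (by rw [nonbasicPart_joinIdx]; rfl)
  rw [basicPart_joinIdx]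
  change ((Bmat hmn A)⁻¹ * Bmat hmn A) i = _
  ext i'
  rw [nonsing_inv_mul _ hB, one_eq_pi_single]

end Tableau

section Basis

variable (hmn : m ≤ n) (A : Matrix (Fin m) (Fin n) ℝ) {b' : Fin m → ℝ} {c' x s : Fin n → ℝ}
  {y : Fin m → ℝ}

lemma basicPart_eq_of_mulVec_eq (hB : IsUnit (Bmat hmn A).det) (hx : A *ᵥ x = b')
    (hxN : nonbasicPart hmn x = 0) : basicPart hmn x = (Bmat hmn A)⁻¹ *ᵥ b' := by
  rw [← hx, mulVec_idx hmn, hxN, mulVec_zero, add_zero, mulVec_mulVec, nonsing_inv_mul _ hB,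
    one_mulVec]

lemma transpose_mulVec_eq_of_dual (hy : Aᵀ *ᵥ y + s = c') (hsB : basicPart hmn s = 0) :
    (Bmat hmn A)ᵀ *ᵥ y = basicPart hmn c' := by
  rw [← hy, basicPart_add, hsB, add_zero, basicPart_transpose_mulVec]

lemma nonbasicPart_eq_reducedCost (hB : IsUnit (Bmat hmn A).det) (hy : Aᵀ *ᵥ y + s = c')
    (hsB : basicPart hmn s = 0) : nonbasicPart hmn s = reducedCost hmn A c' := by
  rw [reducedCost, ← transpose_mulVec_eq_of_dual hmn A hy hsB,
    BN_transpose_mulVec_transpose_mulVec hmn A hB, ← hy, nonbasicPart_add,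
    nonbasicPart_transpose_mulVec, add_sub_cancel_left]

end Basis

namespace UniqueOpt

variable {hmn : m ≤ n} {A : Matrix (Fin m) (Fin n) ℝ} {b : Fin m → ℝ} {c x : Fin n → ℝ}
  {y : Fin m → ℝ} {s : Fin n → ℝ}

lemma nonbasicPart_primal_eq_zero (h : UniqueOpt hmn A b c x y s) : nonbasicPart hmn x = 0 :=
  funext fun j => le_antisymm
    (not_lt.mp fun hpos => (le_nIdx hmn j).not_gt ((h.xstar_supp _).mp hpos))
    (h.primal_feas.2 _)

lemma basicPart_slack_eq_zero (h : UniqueOpt hmn A b c x y s) : basicPart hmn s = 0 :=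
  funext fun i => le_antisymm
    (not_lt.mp fun hpos => (bIdx_lt hmn i).not_ge ((h.sstar_supp _).mp hpos))
    (h.dual_feas.2 _)

lemma basicPart_primal_pos (h : UniqueOpt hmn A b c x y s) (i : Fin m) :
    0 < basicPart hmn x i :=
  (h.xstar_supp _).mpr (bIdx_lt hmn i)

lemma nonbasicPart_slack_pos (h : UniqueOpt hmn A b c x y s) (j : Fin (n - m)) :
    0 < nonbasicPart hmn s j :=
  (h.sstar_supp _).mpr (le_nIdx hmn j)

lemma basicPart_primal (h : UniqueOpt hmn A b c x y s) :
    basicPart hmn x = (Bmat hmn A)⁻¹ *ᵥ b :=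
  basicPart_eq_of_mulVec_eq hmn A h.basis_isUnit h.primal_feas.1 h.nonbasicPart_primal_eq_zero

lemma nonbasicPart_slack (h : UniqueOpt hmn A b c x y s) :
    nonbasicPart hmn s = reducedCost hmn A c :=
  nonbasicPart_eq_reducedCost hmn A h.basis_isUnit h.dual_feas.1 h.basicPart_slack_eq_zero

end UniqueOpt

section StrictComplementarity

variable {hmn : m ≤ n} {A : Matrix (Fin m) (Fin n) ℝ} {b' : Fin m → ℝ} {c' x s : Fin n → ℝ}
  {y : Fin m → ℝ}

lemma primal_eq_of_complementary (hB : IsUnit (Bmat hmn A).det) (hx : A *ᵥ x = b')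
    (hxN : nonbasicPart hmn x = 0) (hs : ∀ k, 0 ≤ s k) (hsN : ∀ j, 0 < nonbasicPart hmn s j)
    {x' : Fin n → ℝ} (hx' : PrimalFeasible A b' x') (hsx' : s ⬝ᵥ x' = 0) : x' = x := by
  have hx'N : nonbasicPart hmn x' = 0 :=
    funext fun j => eq_zero_of_dotProduct_eq_zero hs hx'.2 hsx' (hsN j)
  refine funext_idx hmn ?_ (by rw [hx'N, hxN])
  rw [basicPart_eq_of_mulVec_eq hmn A hB hx'.1 hx'N, basicPart_eq_of_mulVec_eq hmn A hB hx hxN]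

lemma dual_eq_of_complementary (hB : IsUnit (Bmat hmn A).det) (hy : Aᵀ *ᵥ y + s = c')
    (hsB : basicPart hmn s = 0) (hx : ∀ k, 0 ≤ x k) (hxB : ∀ i, 0 < basicPart hmn x i)
    {y' : Fin m → ℝ} {s' : Fin n → ℝ} (hy' : DualFeasible A c' y' s') (hs'x : s' ⬝ᵥ x = 0) :
    y' = y ∧ s' = s := by
  have hs'B : basicPart hmn s' = 0 := funext fun i =>
    eq_zero_of_dotProduct_eq_zero hx hy'.2 (by rwa [dotProduct_comm]) (hxB i)
  have hBt : IsUnit (Bmat hmn A)ᵀ := (isUnit_iff_isUnit_det _).mpr (by rwa [det_transpose])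
  have hyy : y' = y := mulVec_injective_iff_isUnit.mpr hBt <| by
    rw [transpose_mulVec_eq_of_dual hmn A hy'.1 hs'B, transpose_mulVec_eq_of_dual hmn A hy hsB]
  refine ⟨hyy, ?_⟩
  rw [eq_sub_of_add_eq' hy'.1, eq_sub_of_add_eq' hy, hyy]

theorem uniqueOpt_of_strictlyComplementary (hind : LinearIndependent ℝ (fun i => A i))
    (hB : IsUnit (Bmat hmn A).det) (hx : A *ᵥ x = b') (hy : Aᵀ *ᵥ y + s = c')
    (hxN : nonbasicPart hmn x = 0) (hsB : basicPart hmn s = 0)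
    (hxB : ∀ i, 0 < basicPart hmn x i) (hsN : ∀ j, 0 < nonbasicPart hmn s j) :
    UniqueOpt hmn A b' c' x y s := by
  have hx0 : ∀ k, 0 ≤ x k :=
    (forall_idx hmn).mpr ⟨fun i => (hxB i).le, fun j => (congrFun hxN j).ge⟩
  have hs0 : ∀ k, 0 ≤ s k :=
    (forall_idx hmn).mpr ⟨fun i => (congrFun hsB i).ge, fun j => (hsN j).le⟩
  have hsx : s ⬝ᵥ x = 0 := by simp [dotProduct_idx hmn, hsB, hxN]
  have hcx := dotProduct_eq_of_feasible hx hy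
  refine
    { rows_indep := hind
      primal_feas := ⟨hx, hx0⟩
      primal_opt := fun x' hx' => ?_
      primal_uniq := fun x' hx' hcx' => ?_
      dual_feas := ⟨hy, hs0⟩
      dual_opt := fun y' s' hy' => ?_
      dual_uniq := fun y' s' hy' hby' => ?_
      basis_isUnit := hB
      xstar_supp := (forall_idx hmn).mpr
        ⟨fun i => iff_of_true (hxB i) (bIdx_lt hmn i),
          fun j => iff_of_false (congrFun hxN j).le.not_gt
            (le_nIdx hmn j).not_gt⟩
      sstar_supp := (forall_idx hmn).mpr
        ⟨fun i => iff_of_false (congrFun hsB i).le.not_gt (bIdx_lt hmn i).not_ge,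
          fun j => iff_of_true (hsN j) (le_nIdx hmn j)⟩ }
  · have := dotProduct_eq_of_feasible hx'.1 hy
    have := dotProduct_nonneg_of_nonneg (v := s) hs0 hx'.2
    linarith
  · have := dotProduct_eq_of_feasible hx'.1 hy
    exact primal_eq_of_complementary hB hx hxN hs0 hsN hx' (by linarith)
  · have := dotProduct_eq_of_feasible hx hy'.1
    have := dotProduct_nonneg_of_nonneg (v := s') hy'.2 hx0
    linarith
  · have := dotProduct_eq_of_feasible hx hy'.1
    exact dual_eq_of_complementary hB hy hsB hx0 hxB hy' (by linarith)

end StrictComplementarity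

theorem uniqueOptBasis_iff (hmn : m ≤ n) (A : Matrix (Fin m) (Fin n) ℝ) (b' : Fin m → ℝ)
    (c' : Fin n → ℝ) (hind : LinearIndependent ℝ (fun i => A i))
    (hB : IsUnit (Bmat hmn A).det) :
    UniqueOptBasis hmn A b' c' ↔
      (∀ i, 0 < ((Bmat hmn A)⁻¹ *ᵥ b') i) ∧ ∀ j, 0 < reducedCost hmn A c' j := by
  constructor
  · rintro ⟨x, y, s, h⟩
    rw [← h.basicPart_primal, ← h.nonbasicPart_slack]
    exact ⟨h.basicPart_primal_pos, h.nonbasicPart_slack_pos⟩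
  · rintro ⟨hxB, hsN⟩
    set y := ((Bmat hmn A)ᵀ)⁻¹ *ᵥ basicPart hmn c'
    have hy : Aᵀ *ᵥ y + (c' - Aᵀ *ᵥ y) = c' := add_sub_cancel _ _
    have hBt : IsUnit ((Bmat hmn A)ᵀ).det := by rwa [det_transpose]
    have hsB : basicPart hmn (c' - Aᵀ *ᵥ y) = 0 := by
      rw [basicPart_sub, basicPart_transpose_mulVec, mulVec_mulVec, mul_nonsing_inv _ hBt,
        one_mulVec, sub_self]
    refine ⟨joinIdx hmn ((Bmat hmn A)⁻¹ *ᵥ b') 0, y, c' - Aᵀ *ᵥ y,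
      uniqueOpt_of_strictlyComplementary hind hB ?_ hy (nonbasicPart_joinIdx ..) hsB
        (by rwa [basicPart_joinIdx]) ?_⟩
    · rw [mulVec_idx hmn, basicPart_joinIdx, nonbasicPart_joinIdx, mulVec_zero, add_zero,
        mulVec_mulVec, mul_nonsing_inv _ hB, one_mulVec]
    · rwa [nonbasicPart_eq_reducedCost hmn A hB hy hsB]

section Stability

variable (hmn : m ≤ n) (A : Matrix (Fin m) (Fin n) ℝ)

def reducedCostGrad (j : Fin (n - m)) : Fin n → ℝ :=
  joinIdx hmn (-fun i => BN hmn A i j) (Pi.single j 1)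

lemma reducedCost_apply_eq_dotProduct (c' : Fin n → ℝ) (j : Fin (n - m)) :
    reducedCost hmn A c' j = reducedCostGrad hmn A j ⬝ᵥ c' := by
  rw [reducedCostGrad, dotProduct_idx hmn, basicPart_joinIdx, nonbasicPart_joinIdx,
    single_dotProduct, one_mul, neg_dotProduct, ← sub_eq_neg_add]
  rfl

lemma enorm_reducedCostGrad (j : Fin (n - m)) :
    enorm (reducedCostGrad hmn A j) = √(∑ i, BN hmn A i j ^ 2 + 1) := by
  simp [enorm, reducedCostGrad, sum_sq_joinIdx, Pi.single_apply]

variable {b : Fin m → ℝ} {c xstar : Fin n → ℝ} {ystar : Fin m → ℝ} {sstar : Fin n → ℝ}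

theorem zetaP_eq_iInf (h : UniqueOpt hmn A b c xstar ystar sstar) :
    zetaP hmn A b c = ⨅ j, sstar (nIdx hmn j) / √(∑ i, BN hmn A i j ^ 2 + 1) := by
  let T := (WithLp.linearEquiv 2 ℝ (Fin n → ℝ)).symm.toLinearMap
  let g j := WithLp.toLp 2 (reducedCostGrad hmn A j)
  have hg : ∀ j, ‖g j‖ = √(∑ i, BN hmn A i j ^ 2 + 1) := fun j => by
    rw [norm_toLp_eq_enorm, enorm_reducedCostGrad]
  have hset : {t | ∃ dc, t = enorm dc ∧ ¬ UniqueOptBasis hmn A b (c + dc)} =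
      {t | ∃ v, t = ‖T v‖ ∧ ∃ j, nonbasicPart hmn sstar j + ⟪g j, T v⟫_ℝ ≤ 0} := by
    ext t
    refine exists_congr fun dc => and_congr (by rw [← norm_toLp_eq_enorm]; rfl) ?_
    rw [uniqueOptBasis_iff hmn A b _ h.rows_indep h.basis_isUnit, ← h.basicPart_primal,
      reducedCost_add, ← h.nonbasicPart_slack]
    simp [h.basicPart_primal_pos, reducedCost_apply_eq_dotProduct, T, g,
      EuclideanSpace.inner_toLp_toLp, dotProduct_comm dc]
  rw [zetaP, hset, sInf_norm_add_inner_nonpos_eq_iInf T g (fun j => ⟨_, rfl⟩)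
    (fun j => norm_pos_iff.mp (by rw [hg]; positivity)) _
    (fun j => (h.nonbasicPart_slack_pos j).le)]
  simp_rw [hg]
  rfl

theorem zetaD_eq_iInf (h : UniqueOpt hmn A b c xstar ystar sstar) :
    zetaD hmn A b c = ⨅ i, xstar (bIdx hmn i) / √(∑ j, BN hmn A i j ^ 2 + 1) := by
  have hU := isUnit_det_mul_transpose_s16 h.rows_indep
  -- an isometry from the `(AAᵀ)⁻¹`-norm onto the row space of `A` with the Euclidean norm
  let T := (WithLp.linearEquiv 2 ℝ (Fin n → ℝ)).symm.toLinearMap ∘ₗ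
    (Aᵀ * (A * Aᵀ)⁻¹).mulVecLin
  let g i := WithLp.toLp 2 (((Bmat hmn A)⁻¹ * A) i)
  have hg : ∀ i, ‖g i‖ = √(∑ j, BN hmn A i j ^ 2 + 1) := fun i => by
    rw [norm_toLp_eq_enorm, inv_mul_row_eq_joinIdx hmn A h.basis_isUnit, enorm,
      sum_sq_joinIdx]
    simp [Pi.single_apply, add_comm]
  have hgT : ∀ i, g i ∈ LinearMap.range T := fun i => ⟨_, congrArg (WithLp.toLp 2)
    ((transpose_mul_inv_mulVec_mul_transpose_mulVec hU _).trans (mulVec_transpose _ _))⟩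
  have hinner : ∀ i db, ⟪g i, T db⟫_ℝ = ((Bmat hmn A)⁻¹ *ᵥ db) i := fun i db => by
    change (Aᵀ * (A * Aᵀ)⁻¹) *ᵥ db ⬝ᵥ star (((Bmat hmn A)⁻¹ * A) i) = _
    rw [star_trivial, dotProduct_comm,
      ← mul_mulVec_transpose_mul_inv_mulVec hU (Bmat hmn A)⁻¹]
    rfl
  have hset : {t | ∃ db, t = √(db ⬝ᵥ (A * Aᵀ)⁻¹ *ᵥ db) ∧ ¬ UniqueOptBasis hmn A (b + db) c} =
      {t | ∃ v, t = ‖T v‖ ∧ ∃ i, basicPart hmn xstar i + ⟪g i, T v⟫_ℝ ≤ 0} := by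
    ext t
    refine exists_congr fun db => and_congr ?_ ?_
    · rw [← dotProduct_self_transpose_mul_inv_mulVec hU, ← enorm_eq_sqrt_dotProduct,
        ← norm_toLp_eq_enorm]
      rfl
    rw [uniqueOptBasis_iff hmn A _ c h.rows_indep h.basis_isUnit, ← h.nonbasicPart_slack,
      mulVec_add, ← h.basicPart_primal]
    simp [h.nonbasicPart_slack_pos, hinner]
  rw [zetaD, hset, sInf_norm_add_inner_nonpos_eq_iInf T g hgT
    (fun i => norm_pos_iff.mp (by rw [hg]; positivity)) _
    (fun i => (h.basicPart_primal_pos i).le)]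
  simp_rw [hg]
  rfl

end Stability

/-- equation (40) in the paper. Under the unique-optimum assumption,
for any reweights `ω₁, ω₂ > 0`, the condition number of the reweighted LP
`min (ω₁c)ᵀx s.t. Ax = ω₂b, x ≥ 0` (whose unique primal/dual-slack optima are `ω₂x*` and
`ω₁s*`, with the same optimal basis) satisfies
`Φ_{ω₁,ω₂} = (ω₂‖x*‖₁ + ω₁‖s*‖₁) · max{1/(ω₁ζ_p), 1/(ω₂ζ_d)}`. -/
theorem reweighted_phi_formula (m n : ℕ) (hmn : m ≤ n)
    (A : Matrix (Fin m) (Fin n) ℝ) (b : Fin m → ℝ) (c : Fin n → ℝ)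
    (xstar : Fin n → ℝ) (ystar : Fin m → ℝ) (sstar : Fin n → ℝ)
    (h : UniqueOpt hmn A b c xstar ystar sstar)
    (ω₁ ω₂ : ℝ) (hω₁ : 0 < ω₁) (hω₂ : 0 < ω₂) :
    Phi hmn A (ω₂ • xstar) (ω₁ • sstar) =
      (ω₂ * l1 xstar + ω₁ * l1 sstar) *
        max (1 / (ω₁ * zetaP hmn A b c)) (1 / (ω₂ * zetaD hmn A b c)) := by
  have hq : ∀ {k : ℕ} (v : Fin k → ℝ), 0 < √(∑ l, v l ^ 2 + 1) := fun v => by positivity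
  rw [zetaP_eq_iInf hmn A h, zetaD_eq_iInf hmn A h,
    ← iSup_div_mul_eq_one_div_mul_iInf (p := fun j => sstar (nIdx hmn j))
      h.nonbasicPart_slack_pos (fun j => hq fun i => BN hmn A i j) hω₁,
    ← iSup_div_mul_eq_one_div_mul_iInf (p := fun i => xstar (bIdx hmn i))
      h.basicPart_primal_pos (fun i => hq (BN hmn A i)) hω₂]
  simp only [Phi, PhiFactor, l1_smul hω₁.le, l1_smul hω₂.le, Pi.smul_apply, smul_eq_mul]

end LPPaper
end
end
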